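/- Let τ, q, θ₁ and H_{(a,b,c)} be as given. Then for every permutation (a,b,c) of (−1/6, 1/6, 1/2) and every u ∈ ℂ at which the relevant denominators are nonzero, H_{(a,b,c)}(u + 1) = H_{(a,b,c)}(u) and H_{(a,b,c)}(u + τ) = H_{(a,b,c)}(u); i.e. H_{(a,b,c)} is doubly periodic with respect to the lattice ℤ + τℤ. -/
import Mathlib


/-- The Jacobi theta function
`θ₁(u) = 2·q^{1/8}·Σ_{k≥0} (−1)^k q^{k(k+1)/2}·sin(π(2k+1)u)`, with `q = exp(2πiτ)`. -/
noncomputable def jacobiθ₁ (τ u : ℂ) : ℂ :=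
  2 * Complex.exp (Real.pi * Complex.I * τ / 4) *
    ∑' k : ℕ, (-1 : ℂ) ^ k * Complex.exp (Real.pi * Complex.I * τ * k * (k + 1)) *
      Complex.sin (Real.pi * (2 * (k : ℂ) + 1) * u)

/-- `H_{(a,b,c)}(u) = i·e^{3πia}·θ₁(u − a)²/(θ₁(u − b)·θ₁(u − c))`. -/
noncomputable def Hfun (τ a b c u : ℂ) : ℂ :=
  Complex.I * Complex.exp (3 * Real.pi * Complex.I * a) * (jacobiθ₁ τ (u - a)) ^ 2 /
    (jacobiθ₁ τ (u - b) * jacobiθ₁ τ (u - c))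

open Real

lemma exp_eq_of_sub_int (x y : ℂ) (n : ℤ) (h : x = y + n * (2 * π * Complex.I)) :
    Complex.exp x = Complex.exp y := by
  rw [h, Complex.exp_add, Complex.exp_int_mul_two_pi_mul_I, mul_one]

lemma theta_term_eq (τ u : ℂ) (k : ℕ) :
    2 * Complex.exp (π * Complex.I * τ / 4) * ((-1 : ℂ) ^ k *
        Complex.exp (π * Complex.I * τ * k * (k + 1)) *
        Complex.sin (π * (2 * (k : ℂ) + 1) * u)) =
      -Complex.I * Complex.exp (π * Complex.I * τ / 4 + π * Complex.I * u) *
        jacobiTheta₂_term (k : ℤ) (u + 1/2 + τ/2) τ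
      + -Complex.I * Complex.exp (π * Complex.I * τ / 4 + π * Complex.I * u) *
        jacobiTheta₂_term (-((k : ℤ) + 1)) (u + 1/2 + τ/2) τ := by
  have hm1 : ((-1 : ℂ)) ^ k = Complex.exp ((k : ℂ) * (π * Complex.I)) := by
    rw [Complex.exp_nat_mul, Complex.exp_pi_mul_I]
  have hsin : Complex.sin (π * (2 * (k : ℂ) + 1) * u)
      = ((Complex.exp (-(π * (2 * (k : ℂ) + 1) * u) * Complex.I)
          - Complex.exp ((π * (2 * (k : ℂ) + 1) * u) * Complex.I)) * Complex.I) / 2 := rfl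
  rw [jacobiTheta₂_term, jacobiTheta₂_term, hm1, hsin]
  push_cast
  have h1 : Complex.exp (π * Complex.I * τ / 4) * Complex.exp ((k : ℂ) * (π * Complex.I)) *
        Complex.exp (π * Complex.I * τ * k * (k + 1)) *
        Complex.exp ((π * (2 * (k : ℂ) + 1) * u) * Complex.I)
      = Complex.exp (π * Complex.I * τ / 4 + π * Complex.I * u) *
        Complex.exp (2 * π * Complex.I * (k : ℂ) * (u + 1/2 + τ/2) + π * Complex.I * (k : ℂ) ^ 2 * τ) := by
    rw [← Complex.exp_add, ← Complex.exp_add, ← Complex.exp_add, ← Complex.exp_add]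
    congr 1
    ring
  have h2 : Complex.exp (π * Complex.I * τ / 4) * Complex.exp ((k : ℂ) * (π * Complex.I)) *
        Complex.exp (π * Complex.I * τ * k * (k + 1)) *
        Complex.exp ((-(π * (2 * (k : ℂ) + 1) * u)) * Complex.I)
      = -(Complex.exp (π * Complex.I * τ / 4 + π * Complex.I * u) *
        Complex.exp (2 * π * Complex.I * (-((k : ℂ) + 1)) * (u + 1/2 + τ/2) + π * Complex.I * (-((k : ℂ) + 1)) ^ 2 * τ)) := by
    rw [← Complex.exp_add, ← Complex.exp_add, ← Complex.exp_add, ← Complex.exp_add]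
    rw [show (π * Complex.I * τ / 4 + (k : ℂ) * (π * Complex.I) + π * Complex.I * τ * k * (k + 1) +
        (-(π * (2 * (k : ℂ) + 1) * u)) * Complex.I)
      = (π * Complex.I * τ / 4 + π * Complex.I * u +
        (2 * π * Complex.I * (-((k : ℂ) + 1)) * (u + 1/2 + τ/2) + π * Complex.I * (-((k : ℂ) + 1)) ^ 2 * τ))
        + ((k : ℂ) * (2 * π * Complex.I) + π * Complex.I) by ring]
    rw [Complex.exp_add, Complex.exp_add ((k : ℂ) * (2 * (π:ℝ) * Complex.I)) ((π:ℝ) * Complex.I), Complex.exp_pi_mul_I]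
    rw [show ((k : ℂ) * (2 * π * Complex.I)) = ((k : ℤ) : ℂ) * (2 * π * Complex.I) by push_cast; ring,
      Complex.exp_int_mul_two_pi_mul_I]
    ring
  linear_combination Complex.I * h2 - Complex.I * h1

lemma jacobiθ₁_rep (τ u : ℂ) (hτ : 0 < τ.im) :
    jacobiθ₁ τ u = -Complex.I * Complex.exp (π * Complex.I * τ / 4 + π * Complex.I * u) *
      jacobiTheta₂ (u + 1/2 + τ/2) τ := by
  have hs : Summable (fun n : ℤ => -Complex.I *
      Complex.exp (π * Complex.I * τ / 4 + π * Complex.I * u) *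
      jacobiTheta₂_term n (u + 1/2 + τ/2) τ) :=
    ((summable_jacobiTheta₂_term_iff _ τ).2 hτ).mul_left _
  calc jacobiθ₁ τ u
      = ∑' k : ℕ, 2 * Complex.exp (π * Complex.I * τ / 4) * ((-1 : ℂ) ^ k *
          Complex.exp (π * Complex.I * τ * k * (k + 1)) *
          Complex.sin (π * (2 * (k : ℂ) + 1) * u)) := by
        rw [jacobiθ₁, tsum_mul_left]
    _ = ∑' k : ℕ, (-Complex.I * Complex.exp (π * Complex.I * τ / 4 + π * Complex.I * u) *
          jacobiTheta₂_term (k : ℤ) (u + 1/2 + τ/2) τ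
        + -Complex.I * Complex.exp (π * Complex.I * τ / 4 + π * Complex.I * u) *
          jacobiTheta₂_term (-((k : ℤ) + 1)) (u + 1/2 + τ/2) τ) :=
        tsum_congr fun k => theta_term_eq τ u k
    _ = ∑' n : ℤ, -Complex.I * Complex.exp (π * Complex.I * τ / 4 + π * Complex.I * u) *
          jacobiTheta₂_term n (u + 1/2 + τ/2) τ := tsum_nat_add_neg_add_one hs
    _ = -Complex.I * Complex.exp (π * Complex.I * τ / 4 + π * Complex.I * u) *
          jacobiTheta₂ (u + 1/2 + τ/2) τ := by
        rw [jacobiTheta₂, tsum_mul_left]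

lemma jacobiθ₁_add_one (τ u : ℂ) (hτ : 0 < τ.im) :
    jacobiθ₁ τ (u + 1) = -jacobiθ₁ τ u := by
  rw [jacobiθ₁_rep τ (u + 1) hτ, jacobiθ₁_rep τ u hτ,
    show u + 1 + 1/2 + τ/2 = (u + 1/2 + τ/2) + 1 by ring, jacobiTheta₂_add_left,
    show (π * Complex.I * τ / 4 + π * Complex.I * (u + 1))
      = (π * Complex.I * τ / 4 + π * Complex.I * u) + π * Complex.I by ring,
    Complex.exp_add, Complex.exp_pi_mul_I]
  ring

lemma jacobiθ₁_add_tau (τ u : ℂ) (hτ : 0 < τ.im) :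
    jacobiθ₁ τ (u + τ) = -(Complex.exp (-(π * Complex.I * τ) - 2 * π * Complex.I * u) *
      jacobiθ₁ τ u) := by
  rw [jacobiθ₁_rep τ (u + τ) hτ, jacobiθ₁_rep τ u hτ,
    show u + τ + 1/2 + τ/2 = (u + 1/2 + τ/2) + τ by ring, jacobiTheta₂_add_left']
  have h : -Complex.I * Complex.exp (π * Complex.I * τ / 4 + π * Complex.I * (u + τ)) *
      Complex.exp (-(π : ℂ) * Complex.I * (τ + 2 * (u + 1/2 + τ/2)))
      = -(Complex.exp (-(π * Complex.I * τ) - 2 * π * Complex.I * u) *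
        (-Complex.I * Complex.exp (π * Complex.I * τ / 4 + π * Complex.I * u))) := by
    rw [mul_assoc (-Complex.I), ← Complex.exp_add,
      exp_eq_of_sub_int (π * Complex.I * τ / 4 + π * Complex.I * (u + τ) +
          -(π : ℂ) * Complex.I * (τ + 2 * (u + 1/2 + τ/2)))
        ((-(π * Complex.I * τ) - 2 * π * Complex.I * u +
            (π * Complex.I * τ / 4 + π * Complex.I * u)) + (π : ℝ) * Complex.I) (-1)
        (by push_cast; ring),
      Complex.exp_add, Complex.exp_add, Complex.exp_pi_mul_I]
    ring
  calc -Complex.I * Complex.exp (π * Complex.I * τ / 4 + π * Complex.I * (u + τ)) *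
        (Complex.exp (-(π : ℂ) * Complex.I * (τ + 2 * (u + 1/2 + τ/2))) *
          jacobiTheta₂ (u + 1/2 + τ/2) τ)
      = (-Complex.I * Complex.exp (π * Complex.I * τ / 4 + π * Complex.I * (u + τ)) *
        Complex.exp (-(π : ℂ) * Complex.I * (τ + 2 * (u + 1/2 + τ/2)))) *
          jacobiTheta₂ (u + 1/2 + τ/2) τ := by ring
    _ = _ := by rw [h]; ring

/-- For every permutation `(a,b,c)` of `(−1/6, 1/6, 1/2)` and every `u` at
which the relevant denominators are nonzero, `H_{(a,b,c)}(u + 1) = H_{(a,b,c)}(u)` and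
`H_{(a,b,c)}(u + τ) = H_{(a,b,c)}(u)`. -/
theorem conifold_stmt16 (τ : ℂ) (hτ : 0 < τ.im) (a b c : ℂ)
    (hperm : ({a, b, c} : Multiset ℂ) = ({-(1 / 6), 1 / 6, 1 / 2} : Multiset ℂ)) (u : ℂ) :
    (jacobiθ₁ τ (u - b) * jacobiθ₁ τ (u - c) ≠ 0 →
      jacobiθ₁ τ (u + 1 - b) * jacobiθ₁ τ (u + 1 - c) ≠ 0 →
      Hfun τ a b c (u + 1) = Hfun τ a b c u) ∧
    (jacobiθ₁ τ (u - b) * jacobiθ₁ τ (u - c) ≠ 0 →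
      jacobiθ₁ τ (u + τ - b) * jacobiθ₁ τ (u + τ - c) ≠ 0 →
      Hfun τ a b c (u + τ) = Hfun τ a b c u) := by
  have hmem : a ∈ ({-(1 / 6), 1 / 6, 1 / 2} : Multiset ℂ) := by
    rw [← hperm]; simp
  simp only [Multiset.insert_eq_cons, Multiset.mem_cons, Multiset.mem_singleton] at hmem
  have h := congrArg Multiset.sum hperm
  simp only [Multiset.insert_eq_cons, Multiset.sum_cons, Multiset.sum_singleton] at h
  have hbc : b + c = 1 / 2 - a := by linear_combination h
  constructor
  · intro _ _
    rw [Hfun, Hfun, show u + 1 - a = (u - a) + 1 by ring, show u + 1 - b = (u - b) + 1 by ring,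
      show u + 1 - c = (u - c) + 1 by ring, jacobiθ₁_add_one _ _ hτ, jacobiθ₁_add_one _ _ hτ,
      jacobiθ₁_add_one _ _ hτ]
    ring
  · intro h1 _
    rw [Hfun, Hfun, show u + τ - a = (u - a) + τ by ring, show u + τ - b = (u - b) + τ by ring,
      show u + τ - c = (u - c) + τ by ring, jacobiθ₁_add_tau _ _ hτ, jacobiθ₁_add_tau _ _ hτ,
      jacobiθ₁_add_tau _ _ hτ]
    have hF : Complex.exp (-(π * Complex.I * τ) - 2 * π * Complex.I * (u - a)) ^ 2
        = Complex.exp (-(π * Complex.I * τ) - 2 * π * Complex.I * (u - b)) *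
          Complex.exp (-(π * Complex.I * τ) - 2 * π * Complex.I * (u - c)) := by
      rw [sq, ← Complex.exp_add, ← Complex.exp_add]
      rcases hmem with rfl | rfl | rfl
      · exact exp_eq_of_sub_int _ _ (-1)
          (by push_cast; linear_combination (-2 * (Real.pi : ℂ) * Complex.I) * hbc)
      · exact exp_eq_of_sub_int _ _ 0
          (by push_cast; linear_combination (-2 * (Real.pi : ℂ) * Complex.I) * hbc)
      · exact exp_eq_of_sub_int _ _ 1
          (by push_cast; linear_combination (-2 * (Real.pi : ℂ) * Complex.I) * hbc)
    have hY : -(Complex.exp (-(π * Complex.I * τ) - 2 * π * Complex.I * (u - b)) *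
          jacobiθ₁ τ (u - b)) *
        -(Complex.exp (-(π * Complex.I * τ) - 2 * π * Complex.I * (u - c)) *
          jacobiθ₁ τ (u - c)) ≠ 0 := by
      rw [show -(Complex.exp (-(π * Complex.I * τ) - 2 * π * Complex.I * (u - b)) *
          jacobiθ₁ τ (u - b)) *
        -(Complex.exp (-(π * Complex.I * τ) - 2 * π * Complex.I * (u - c)) *
          jacobiθ₁ τ (u - c))
        = (Complex.exp (-(π * Complex.I * τ) - 2 * π * Complex.I * (u - b)) *
            Complex.exp (-(π * Complex.I * τ) - 2 * π * Complex.I * (u - c))) *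
          (jacobiθ₁ τ (u - b) * jacobiθ₁ τ (u - c)) by ring]
      exact mul_ne_zero (mul_ne_zero (Complex.exp_ne_zero _) (Complex.exp_ne_zero _)) h1
    rw [div_eq_div_iff hY h1]
    linear_combination (Complex.I * Complex.exp (3 * (Real.pi : ℂ) * Complex.I * a) *
      jacobiθ₁ τ (u - a) ^ 2 * (jacobiθ₁ τ (u - b) * jacobiθ₁ τ (u - c))) * hF
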